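/- arXiv:2009.01751 — 2 statements merged into one kernel-verified Lean document; each statement's English description precedes it below -/
import Mathlib

section
/- Under Slater's condition and boundedness of the cost and constraints, if the non-parametric problem has zero duality gap (P* = D*) and the family {π_θ} is an ε-universal parametrization with the Lagrangian difference bounded as |L(θ*, λ) − L(π*, λ)| ≤ (B_r + ‖λ‖₁ B_l) ε/(1−γ) for any minimizer π* of L(·, λ) and its ε-approximation θ*, then the parametrized dual optimum satisfies P* ≤ D*_θ ≤ P* + (B_r + ‖λ*_ε‖₁ B_l) ε/(1−γ), where λ*_ε is the dual solution of the perturbed problem with perturbations ξ_i = −B_l ε/(1−γ). -/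
/-!
Restricting the minimisation to parametrized policies can only raise the dual function, which
gives `P* = D* ≤ D*_θ`. Conversely, ε-approximating a Lagrangian minimiser bounds `d_θ(λ)` by
`d(λ) + (B_r + ‖λ‖₁ B_l) ε/(1-γ)`; for `λ ≥ 0` the second term of the error is exactly the
perturbation penalty `∑ λ_i · B_l ε/(1-γ)`, so the optimality of `λ*_ε` for the perturbed dual
problem bounds this uniformly in `λ` by `d(λ*_ε) + (B_r + ‖λ*_ε‖₁ B_l) ε/(1-γ) ≤ P* + …`.
-/

open Finset

theorem EReal.iInf_coe_eq_of_forall_le {ι : Type*} {f : ι → ℝ} {i : ι} (h : ∀ j, f i ≤ f j) :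
    ⨅ j, (f j : EReal) = f i :=
  le_antisymm (iInf_le _ i) (le_iInf fun j => EReal.coe_le_coe_iff.mpr (h j))

theorem EReal.iInf_comp_le_iInf_add_of_abs_sub_le {α β : Type*} {f : α → ℝ} (g : β → α)
    {a : α} (ha : ∀ x, f a ≤ f x) {b : β} {c : ℝ} (hb : |f (g b) - f a| ≤ c) :
    ⨅ y, (f (g y) : EReal) ≤ (⨅ x, (f x : EReal)) + c := by
  rw [EReal.iInf_coe_eq_of_forall_le ha, ← EReal.coe_add]
  exact (iInf_le _ b).trans (EReal.coe_le_coe_iff.mpr (by linarith [(abs_le.mp hb).2]))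

theorem lagrangian_error_eq_of_nonneg {ι : Type*} [Fintype ι] (Br Bl ε γ : ℝ) {lam : ι → ℝ}
    (hlam : 0 ≤ lam) :
    (Br + (∑ i, |lam i|) * Bl) * ε / (1 - γ) =
      (∑ i, lam i) * (Bl * ε / (1 - γ)) + Br * ε / (1 - γ) := by
  rw [sum_congr rfl fun i _ => abs_of_nonneg (hlam i)]
  ring

theorem parametrized_dual_two_sided_bound_general
    {Pol : Type*} {Θ : Type*} {r : ℕ}
    (par : Θ → Pol)
    (Br Bl ε γ : ℝ)
    -- Lagrangian, dual functions, primal/dual values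
    (Lag : Pol → (Fin r → ℝ) → ℝ)
    (d dθ : (Fin r → ℝ) → EReal)
    (hd : ∀ lam, d lam = ⨅ p : Pol, ((Lag p lam : ℝ) : EReal))
    (hdθ : ∀ lam, dθ lam = ⨅ t : Θ, ((Lag (par t) lam : ℝ) : EReal))
    (Pstar Dstar Dθstar : EReal)
    (hD : Dstar = ⨆ lam ∈ {lam : Fin r → ℝ | 0 ≤ lam}, d lam)
    (hDθ : Dθstar = ⨆ lam ∈ {lam : Fin r → ℝ | 0 ≤ lam}, dθ lam)
    -- zero duality gap for the non-parametric problem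
    (hstrong : Pstar = Dstar)
    -- ε-universal parametrization: any Lagrangian minimizer admits an ε-approximation
    (happrox : ∀ lam : Fin r → ℝ, 0 ≤ lam →
        ∀ p : Pol, (∀ q : Pol, Lag p lam ≤ Lag q lam) →
          ∃ t : Θ, |Lag (par t) lam - Lag p lam| ≤
            (Br + (∑ i, |lam i|) * Bl) * ε / (1 - γ))
    -- Lagrangian minimizers exist
    (hmin : ∀ lam : Fin r → ℝ, 0 ≤ lam → ∃ p : Pol, ∀ q : Pol, Lag p lam ≤ Lag q lam)
    -- λ*_ε maximizes the dual function of the perturbed problem with ξ_i = −B_l ε/(1−γ)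
    (lamε : Fin r → ℝ) (hlamε : 0 ≤ lamε)
    (hlamε_max : ∀ lam : Fin r → ℝ, 0 ≤ lam →
        d lam + ((∑ i, lam i) * (Bl * ε / (1 - γ)) : ℝ)
          ≤ d lamε + ((∑ i, lamε i) * (Bl * ε / (1 - γ)) : ℝ)) :
    Pstar ≤ Dθstar ∧
      Dθstar ≤ Pstar + (((Br + (∑ i, |lamε i|) * Bl) * ε / (1 - γ) : ℝ) : EReal) := by
  subst hstrong hD hDθ
  refine ⟨iSup₂_mono fun lam _ => ?_, iSup₂_le fun lam hlam => ?_⟩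
  · rw [hd, hdθ]
    exact le_iInf_comp _ par
  obtain ⟨p, hp⟩ := hmin lam hlam
  obtain ⟨t, ht⟩ := happrox lam hlam p hp
  calc dθ lam ≤ d lam + (((Br + (∑ i, |lam i|) * Bl) * ε / (1 - γ) : ℝ) : EReal) := by
        rw [hd, hdθ]
        exact EReal.iInf_comp_le_iInf_add_of_abs_sub_le (f := (Lag · lam)) par hp ht
    _ = d lam + ((∑ i, lam i) * (Bl * ε / (1 - γ)) : ℝ) + ((Br * ε / (1 - γ) : ℝ) : EReal) := by
        rw [lagrangian_error_eq_of_nonneg _ _ _ _ hlam, EReal.coe_add, add_assoc]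
    _ ≤ d lamε + ((∑ i, lamε i) * (Bl * ε / (1 - γ)) : ℝ) + ((Br * ε / (1 - γ) : ℝ) : EReal) :=
        add_le_add_left (hlamε_max lam hlam) _
    _ = d lamε + (((Br + (∑ i, |lamε i|) * Bl) * ε / (1 - γ) : ℝ) : EReal) := by
        rw [lagrangian_error_eq_of_nonneg _ _ _ _ hlamε, EReal.coe_add, add_assoc]
    _ ≤ _ := add_le_add_left (le_biSup d hlamε) _

/-- Theorem 1 of the paper: under Slater's condition, boundedness of
cost and constraints, zero duality gap for the non-parametric problem, and the
ε-universal approximation property of the parametrization (Lagrangian minimizers can be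
ε-approximated with Lagrangian error `(B_r + ‖λ‖₁ B_l) ε/(1−γ)`), the parametrized dual
optimum satisfies `P* ≤ D*_θ ≤ P* + (B_r + ‖λ*_ε‖₁ B_l) ε/(1−γ)`, where `λ*_ε ≥ 0`
maximizes the dual function of the problem perturbed by `ξ_i = −B_l ε/(1−γ)`. -/
theorem parametrized_dual_two_sided_bound
    {Pol : Type*} [Nonempty Pol] {Θ : Type*} [Nonempty Θ] {r : ℕ}
    (J : Pol → ℝ) (Lc : Pol → Fin r → ℝ) (par : Θ → Pol)
    (Br Bl ε γ : ℝ) (hBr : 0 ≤ Br) (hBl : 0 ≤ Bl) (hε : 0 < ε) (hγ : 0 ≤ γ) (hγ1 : γ < 1)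
    -- boundedness of the (discounted) cost and constraints
    (hJbdd : ∀ p, |J p| ≤ Br / (1 - γ)) (hLbdd : ∀ p i, |Lc p i| ≤ Bl / (1 - γ))
    -- Slater's condition: a strictly feasible policy exists
    (hslater : ∃ p : Pol, ∀ i, Lc p i < 0)
    -- Lagrangian, dual functions, primal/dual values
    (Lag : Pol → (Fin r → ℝ) → ℝ)
    (hLag : ∀ p lam, Lag p lam = J p + ∑ i, lam i * Lc p i)
    (d dθ : (Fin r → ℝ) → EReal)
    (hd : ∀ lam, d lam = ⨅ p : Pol, ((Lag p lam : ℝ) : EReal))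
    (hdθ : ∀ lam, dθ lam = ⨅ t : Θ, ((Lag (par t) lam : ℝ) : EReal))
    (Pstar Dstar Dθstar : EReal)
    (hP : Pstar = ⨅ p ∈ {p : Pol | ∀ i, Lc p i ≤ 0}, ((J p : ℝ) : EReal))
    (hD : Dstar = ⨆ lam ∈ {lam : Fin r → ℝ | 0 ≤ lam}, d lam)
    (hDθ : Dθstar = ⨆ lam ∈ {lam : Fin r → ℝ | 0 ≤ lam}, dθ lam)
    -- zero duality gap for the non-parametric problem
    (hstrong : Pstar = Dstar)
    -- ε-universal parametrization: any Lagrangian minimizer admits an ε-approximation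
    (happrox : ∀ lam : Fin r → ℝ, 0 ≤ lam →
        ∀ p : Pol, (∀ q : Pol, Lag p lam ≤ Lag q lam) →
          ∃ t : Θ, |Lag (par t) lam - Lag p lam| ≤
            (Br + (∑ i, |lam i|) * Bl) * ε / (1 - γ))
    -- Lagrangian minimizers exist
    (hmin : ∀ lam : Fin r → ℝ, 0 ≤ lam → ∃ p : Pol, ∀ q : Pol, Lag p lam ≤ Lag q lam)
    -- λ*_ε maximizes the dual function of the perturbed problem with ξ_i = −B_l ε/(1−γ)
    (lamε : Fin r → ℝ) (hlamε : 0 ≤ lamε)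
    (hlamε_max : ∀ lam : Fin r → ℝ, 0 ≤ lam →
        d lam + ((∑ i, lam i) * (Bl * ε / (1 - γ)) : ℝ)
          ≤ d lamε + ((∑ i, lamε i) * (Bl * ε / (1 - γ)) : ℝ)) :
    Pstar ≤ Dθstar ∧
      Dθstar ≤ Pstar + (((Br + (∑ i, |lamε i|) * Bl) * ε / (1 - γ) : ℝ) : EReal) :=
  parametrized_dual_two_sided_bound_general par Br Bl ε γ Lag d dθ hd hdθ Pstar Dstar Dθstar hD hDθ
    hstrong happrox hmin lamε hlamε hlamε_max
end

section
/- For a discounted occupation-measure difference: if π and π_θ are stochastic policies on action space Γ with sup_{s∈S} ∫_Γ |π(a|s) − π_θ(a|s)| da ≤ ε for an ε-universal parametrization, and ρ_π, ρ_{π_θ} denote the normalized discounted occupation measures they induce in an MDP with discount γ ∈ [0,1), then ∫_{S×Γ} |dρ_π − dρ_{π_θ}| ≤ ε/(1−γ). -/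
/-!
Call `μ` and `ν` `c`-close when `∫ (f - g) d(μ - ν) ≤ c` for all measurable `f, g ≥ 0` with
`f + g ≤ 1`; by the Hahn–Jordan decomposition this is exactly `‖μ - ν‖_TV ≤ c`. In this dual
form the relation is stable under everything that builds an occupation measure: it is
transitive with additive constants, survives composition with a Markov kernel, scales and sums.
Replacing the policy costs `ε` at each step (average the pointwise bound over the current state law) and
the transition kernel costs nothing, so the state-action laws at time `t` are within
`(t + 1) ε`, and `(1 - γ) ∑ γ^t (t + 1) ε = ε / (1 - γ)`.
-/

open MeasureTheory ProbabilityTheory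
open scoped ENNReal

namespace MeasureTheory

variable {α β : Type*} [MeasurableSpace α] [MeasurableSpace β]

/-- The dual form `∫ (f - g) d(μ - ν) ≤ c` of `‖μ - ν‖_TV ≤ c`, rearranged so that no
subtraction occurs. -/
def TVDistLE (μ ν : Measure α) (c : ℝ≥0∞) : Prop :=
  ∀ f g : α → ℝ≥0∞, Measurable f → Measurable g → (∀ x, f x + g x ≤ 1) →
    ∫⁻ x, f x ∂μ + ∫⁻ x, g x ∂ν ≤ ∫⁻ x, f x ∂ν + ∫⁻ x, g x ∂μ + c

lemma lintegral_add_lintegral_le_measure_univ {μ : Measure α} {f g : α → ℝ≥0∞}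
    (hf : Measurable f) (hfg : ∀ x, f x + g x ≤ 1) :
    ∫⁻ x, f x ∂μ + ∫⁻ x, g x ∂μ ≤ μ Set.univ := by
  rw [← lintegral_add_left hf, ← lintegral_one]
  exact lintegral_mono hfg

namespace TVDistLE

variable {μ ν : Measure α} {c d : ℝ≥0∞}

lemma refl (μ : Measure α) : TVDistLE μ μ 0 :=
  fun _ _ _ _ _ => by rw [add_zero, add_comm]

lemma mono (h : TVDistLE μ ν c) (hcd : c ≤ d) : TVDistLE μ ν d :=
  fun f g hf hg hfg => (h f g hf hg hfg).trans (by gcongr)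

lemma trans {σ : Measure α} [IsFiniteMeasure σ] (h₁ : TVDistLE μ σ c) (h₂ : TVDistLE σ ν d) :
    TVDistLE μ ν (c + d) := by
  intro f g hf hg hfg
  have hσ : ∫⁻ x, f x ∂σ + ∫⁻ x, g x ∂σ ≠ ∞ :=
    ((lintegral_add_lintegral_le_measure_univ hf hfg).trans_lt (measure_lt_top σ _)).ne
  refine (ENNReal.add_le_add_iff_right hσ).1 ?_
  calc _ = (∫⁻ x, f x ∂μ + ∫⁻ x, g x ∂σ) + (∫⁻ x, f x ∂σ + ∫⁻ x, g x ∂ν) := by ring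
    _ ≤ (∫⁻ x, f x ∂σ + ∫⁻ x, g x ∂μ + c) + (∫⁻ x, f x ∂ν + ∫⁻ x, g x ∂σ + d) :=
      add_le_add (h₁ f g hf hg hfg) (h₂ f g hf hg hfg)
    _ = _ := by ring

lemma smul (h : TVDistLE μ ν c) (r : ℝ≥0∞) : TVDistLE (r • μ) (r • ν) (r * c) := by
  intro f g hf hg hfg
  simp only [lintegral_smul_measure]
  calc _ = r * (∫⁻ x, f x ∂μ + ∫⁻ x, g x ∂ν) := by ring
    _ ≤ r * (∫⁻ x, f x ∂ν + ∫⁻ x, g x ∂μ + c) := mul_le_mul_right (h f g hf hg hfg) r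
    _ = _ := by ring

lemma sum {ι : Type*} {μs νs : ι → Measure α} {cs : ι → ℝ≥0∞}
    (h : ∀ i, TVDistLE (μs i) (νs i) (cs i)) :
    TVDistLE (Measure.sum μs) (Measure.sum νs) (∑' i, cs i) := by
  intro f g hf hg hfg
  simp only [lintegral_sum_measure, ← ENNReal.tsum_add]
  exact ENNReal.tsum_le_tsum fun i => h i f g hf hg hfg

lemma comp_right (h : TVDistLE μ ν c) (κ : Kernel α β) [IsMarkovKernel κ] :
    TVDistLE (κ ∘ₘ μ) (κ ∘ₘ ν) c := by
  intro f g hf hg hfg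
  simp only [Measure.lintegral_bind κ.aemeasurable hf.aemeasurable,
    Measure.lintegral_bind κ.aemeasurable hg.aemeasurable]
  refine h _ _ hf.lintegral_kernel hg.lintegral_kernel fun a => ?_
  simpa using lintegral_add_lintegral_le_measure_univ (μ := κ a) hf hfg

lemma compProd_right [SFinite μ] [SFinite ν] (h : TVDistLE μ ν c) (κ : Kernel α β)
    [IsMarkovKernel κ] : TVDistLE (μ ⊗ₘ κ) (ν ⊗ₘ κ) c := by
  rw [Measure.compProd_eq_comp_prod, Measure.compProd_eq_comp_prod]
  exact h.comp_right _

lemma compProd_left (μ : Measure α) [IsProbabilityMeasure μ] {κ η : Kernel α β}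
    [IsSFiniteKernel κ] [IsSFiniteKernel η] (h : ∀ a, TVDistLE (κ a) (η a) c) :
    TVDistLE (μ ⊗ₘ κ) (μ ⊗ₘ η) c := by
  intro f g hf hg hfg
  simp only [Measure.lintegral_compProd hf, Measure.lintegral_compProd hg]
  calc _ = ∫⁻ a, (∫⁻ b, f (a, b) ∂κ a + ∫⁻ b, g (a, b) ∂η a) ∂μ :=
        (lintegral_add_left hf.lintegral_kernel_prod_right' _).symm
    _ ≤ ∫⁻ a, (∫⁻ b, f (a, b) ∂η a + ∫⁻ b, g (a, b) ∂κ a + c) ∂μ :=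
        lintegral_mono fun a => h a _ _ (hf.comp measurable_prodMk_left)
          (hg.comp measurable_prodMk_left) fun b => hfg (a, b)
    _ = _ := by
        rw [lintegral_add_right _ measurable_const, lintegral_add_left
          hf.lintegral_kernel_prod_right', lintegral_const, measure_univ, mul_one]

lemma compProd [IsProbabilityMeasure μ] [SFinite ν] {κ η : Kernel α β} [IsMarkovKernel κ]
    [IsMarkovKernel η] (h : TVDistLE μ ν c) (hκη : ∀ a, TVDistLE (κ a) (η a) d) :
    TVDistLE (μ ⊗ₘ κ) (ν ⊗ₘ η) (d + c) :=
  (compProd_left μ hκη).trans (h.compProd_right η)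

lemma of_add_eq_add {p n : Measure α} (h : μ + n = ν + p) :
    TVDistLE μ ν (p Set.univ + n Set.univ) := by
  intro f g hf hg hfg
  have hfn := congrArg (fun m => ∫⁻ x, f x ∂m) h
  have hgp := congrArg (fun m => ∫⁻ x, g x ∂m) h
  simp only [lintegral_add_measure] at hfn hgp
  have hfp : ∫⁻ x, f x ∂p ≤ p Set.univ :=
    (lintegral_mono (g := 1) fun x => le_self_add.trans (hfg x)).trans_eq lintegral_one
  have hgn : ∫⁻ x, g x ∂n ≤ n Set.univ :=
    (lintegral_mono (g := 1) fun x => le_add_self.trans (hfg x)).trans_eq lintegral_one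
  calc _ ≤ (∫⁻ x, f x ∂μ + ∫⁻ x, f x ∂n) + (∫⁻ x, g x ∂ν + ∫⁻ x, g x ∂p) :=
        add_le_add le_self_add le_self_add
    _ = (∫⁻ x, f x ∂ν + ∫⁻ x, g x ∂μ) + (∫⁻ x, f x ∂p + ∫⁻ x, g x ∂n) := by
        rw [hfn, ← hgp]; ring
    _ ≤ _ := by gcongr

lemma le_of_add_eq_add [IsFiniteMeasure μ] [IsFiniteMeasure ν] {p n : Measure α}
    (h : TVDistLE μ ν c) (hμν : μ + n = ν + p) (hpn : p ⟂ₘ n) :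
    p Set.univ + n Set.univ ≤ c := by
  obtain ⟨t, ht, hpt, hnt⟩ := hpn
  have hcompl := congrArg (· tᶜ) hμν
  have hself := congrArg (· t) hμν
  simp only [Measure.add_apply, hnt, hpt, add_zero] at hcompl hself
  -- `p` lives on `tᶜ` and `n` on `t`: test against the two indicators.
  have hmass := h (tᶜ.indicator 1) (t.indicator 1) (measurable_one.indicator ht.compl)
    (measurable_one.indicator ht) fun x => (Set.indicator_compl_add_self_apply t 1 x).le
  simp only [lintegral_indicator_one ht, lintegral_indicator_one ht.compl] at hmass
  rw [← measure_add_measure_compl ht, ← measure_add_measure_compl (μ := n) ht, hpt, hnt,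
    zero_add, add_zero]
  refine ENNReal.le_of_add_le_add_left (a := ν tᶜ + μ t) (by finiteness) ?_
  calc _ = μ tᶜ + (μ t + n t) := by rw [hcompl]; ring
    _ = μ tᶜ + ν t := by rw [hself]
    _ ≤ _ := hmass

end TVDistLE

lemma add_negPart_eq_add_posPart (μ ν : Measure α) [IsFiniteMeasure μ] [IsFiniteMeasure ν] :
    μ + (μ.toSignedMeasure - ν.toSignedMeasure).toJordanDecomposition.negPart =
      ν + (μ.toSignedMeasure - ν.toSignedMeasure).toJordanDecomposition.posPart := by
  have hj := (μ.toSignedMeasure - ν.toSignedMeasure).toSignedMeasure_toJordanDecomposition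
  rw [JordanDecomposition.toSignedMeasure, sub_eq_sub_iff_add_eq_add] at hj
  rw [← Measure.toSignedMeasure_eq_toSignedMeasure_iff, Measure.toSignedMeasure_add,
    Measure.toSignedMeasure_add, add_comm ν.toSignedMeasure, hj]

theorem tvDistLE_iff_totalVariation_le (μ ν : Measure α) [IsFiniteMeasure μ]
    [IsFiniteMeasure ν] {c : ℝ≥0∞} :
    TVDistLE μ ν c ↔ (μ.toSignedMeasure - ν.toSignedMeasure).totalVariation Set.univ ≤ c := by
  have hjordan := add_negPart_eq_add_posPart μ ν
  refine ⟨fun h => h.le_of_add_eq_add hjordan ?_, fun h => (TVDistLE.of_add_eq_add hjordan).mono h⟩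
  exact JordanDecomposition.mutuallySingular _

end MeasureTheory

lemma tsum_ofReal_pow_mul_succ {γ : ℝ} (hγ0 : 0 ≤ γ) (hγ1 : γ < 1) :
    ∑' t : ℕ, ENNReal.ofReal (γ ^ t) * (t + 1) = ENNReal.ofReal (1 / (1 - γ) ^ 2) := by
  have hnorm : ‖γ‖ < 1 := by rwa [Real.norm_of_nonneg hγ0]
  have hsum := hasSum_choose_mul_geometric_of_norm_lt_one 1 hnorm
  simp only [Nat.choose_one_right, Nat.cast_add, Nat.cast_one] at hsum
  rw [← hsum.tsum_eq, ENNReal.ofReal_tsum_of_nonneg (fun t => by positivity) hsum.summable]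
  congr 1 with t
  rw [mul_comm, ENNReal.ofReal_mul (by positivity)]
  norm_cast

lemma ofReal_one_sub_mul_tsum_pow_mul_add_nat_mul {γ : ℝ} (hγ0 : 0 ≤ γ) (hγ1 : γ < 1) (ε : ℝ) :
    ENNReal.ofReal (1 - γ) *
        ∑' t : ℕ, ENNReal.ofReal (γ ^ t) * (ENNReal.ofReal ε + t * ENNReal.ofReal ε) =
      ENNReal.ofReal (ε / (1 - γ)) := by
  have hγ : 0 < 1 - γ := by linarith
  calc _ = ENNReal.ofReal (1 - γ) * (∑' t : ℕ, ENNReal.ofReal (γ ^ t) * (t + 1)) *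
        ENNReal.ofReal ε := by
        rw [mul_assoc, ← ENNReal.tsum_mul_right]
        congr 2 with t
        ring
    _ = ENNReal.ofReal ((1 - γ) * (1 / (1 - γ) ^ 2) * ε) := by
        rw [tsum_ofReal_pow_mul_succ hγ0 hγ1, ← ENNReal.ofReal_mul hγ.le,
          ← ENNReal.ofReal_mul (by positivity)]
    _ = _ := by
        congr 1
        field_simp

theorem occupation_measure_tv_bound_general
    {S Γ : Type*} [MeasurableSpace S] [MeasurableSpace Γ]
    (P : ProbabilityTheory.Kernel (S × Γ) S) [IsMarkovKernel P]
    (ν0 : Measure S)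
    (κπ κθ : ProbabilityTheory.Kernel S Γ) [IsMarkovKernel κπ] [IsMarkovKernel κθ]
    (γ ε : ℝ) (hγ0 : 0 ≤ γ) (hγ1 : γ < 1)
    -- state marginals `msπ t = law of s_t` under each policy
    (msπ msθ : ℕ → Measure S)
    [∀ t, IsProbabilityMeasure (msπ t)] [∀ t, IsProbabilityMeasure (msθ t)]
    (hmsπ0 : msπ 0 = ν0) (hmsθ0 : msθ 0 = ν0)
    (hmsπ : ∀ t, msπ (t + 1) = ((msπ t) ⊗ₘ κπ).bind (fun sa => P sa))
    (hmsθ : ∀ t, msθ (t + 1) = ((msθ t) ⊗ₘ κθ).bind (fun sa => P sa))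
    -- normalized discounted occupation measures on S × Γ
    (ρπ ρθ : Measure (S × Γ)) [IsFiniteMeasure ρπ] [IsFiniteMeasure ρθ]
    (hρπ : ρπ = ENNReal.ofReal (1 - γ) •
        Measure.sum (fun t : ℕ => ENNReal.ofReal (γ ^ t) • ((msπ t) ⊗ₘ κπ)))
    (hρθ : ρθ = ENNReal.ofReal (1 - γ) •
        Measure.sum (fun t : ℕ => ENNReal.ofReal (γ ^ t) • ((msθ t) ⊗ₘ κθ)))
    -- uniform total-variation bound between the conditional action distributions
    (htv : ∀ s : S, ((κπ s).toSignedMeasure - (κθ s).toSignedMeasure).totalVariation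
        Set.univ ≤ ENNReal.ofReal ε) :
    (ρπ.toSignedMeasure - ρθ.toSignedMeasure).totalVariation Set.univ ≤
      ENNReal.ofReal (ε / (1 - γ)) := by
  have hpolicy (s : S) : TVDistLE (κπ s) (κθ s) (ENNReal.ofReal ε) :=
    (tvDistLE_iff_totalVariation_le _ _).2 (htv s)
  have hstate (t : ℕ) : TVDistLE (msπ t) (msθ t) (t * ENNReal.ofReal ε) := by
    induction t with
    | zero => simpa [hmsπ0, hmsθ0] using TVDistLE.refl ν0
    | succ t ih =>
      rw [hmsπ t, hmsθ t]
      exact ((ih.compProd hpolicy).comp_right P).mono (le_of_eq (by push_cast; ring))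
  have hocc := ((TVDistLE.sum fun t => ((hstate t).compProd hpolicy).smul
    (ENNReal.ofReal (γ ^ t))).smul (ENNReal.ofReal (1 - γ)))
  rw [← hρπ, ← hρθ, ofReal_one_sub_mul_tsum_pow_mul_add_nat_mul hγ0 hγ1] at hocc
  exact (tvDistLE_iff_totalVariation_le _ _).1 hocc

/-- Lemma 1 of [Paternain et al.]: in an MDP with transition kernel `P`,
initial state distribution `ν0`, and discount `γ ∈ [0,1)`, if two policies (Markov
kernels) `κπ, κθ` satisfy the uniform total-variation bound
`∫_Γ |π(a|s) − π_θ(a|s)| da ≤ ε` for all states `s`, then the normalized discounted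
occupation measures `ρ_π, ρ_θ` they induce satisfy `∫ |dρ_π − dρ_θ| ≤ ε/(1−γ)`. -/
theorem occupation_measure_tv_bound
    {S Γ : Type*} [MeasurableSpace S] [MeasurableSpace Γ]
    (P : ProbabilityTheory.Kernel (S × Γ) S) [IsMarkovKernel P]
    (ν0 : Measure S) [IsProbabilityMeasure ν0]
    (κπ κθ : ProbabilityTheory.Kernel S Γ) [IsMarkovKernel κπ] [IsMarkovKernel κθ]
    (γ ε : ℝ) (hγ0 : 0 ≤ γ) (hγ1 : γ < 1) (hε : 0 < ε)
    -- state marginals `msπ t = law of s_t` under each policy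
    (msπ msθ : ℕ → Measure S)
    [∀ t, IsProbabilityMeasure (msπ t)] [∀ t, IsProbabilityMeasure (msθ t)]
    (hmsπ0 : msπ 0 = ν0) (hmsθ0 : msθ 0 = ν0)
    (hmsπ : ∀ t, msπ (t + 1) = ((msπ t) ⊗ₘ κπ).bind (fun sa => P sa))
    (hmsθ : ∀ t, msθ (t + 1) = ((msθ t) ⊗ₘ κθ).bind (fun sa => P sa))
    -- normalized discounted occupation measures on S × Γ
    (ρπ ρθ : Measure (S × Γ)) [IsFiniteMeasure ρπ] [IsFiniteMeasure ρθ]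
    (hρπ : ρπ = ENNReal.ofReal (1 - γ) •
        Measure.sum (fun t : ℕ => ENNReal.ofReal (γ ^ t) • ((msπ t) ⊗ₘ κπ)))
    (hρθ : ρθ = ENNReal.ofReal (1 - γ) •
        Measure.sum (fun t : ℕ => ENNReal.ofReal (γ ^ t) • ((msθ t) ⊗ₘ κθ)))
    -- uniform total-variation bound between the conditional action distributions
    (htv : ∀ s : S, ((κπ s).toSignedMeasure - (κθ s).toSignedMeasure).totalVariation
        Set.univ ≤ ENNReal.ofReal ε) :
    (ρπ.toSignedMeasure - ρθ.toSignedMeasure).totalVariation Set.univ ≤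
      ENNReal.ofReal (ε / (1 - γ)) :=
  occupation_measure_tv_bound_general P ν0 κπ κθ γ ε hγ0 hγ1 msπ msθ hmsπ0 hmsθ0 hmsπ hmsθ ρπ ρθ hρπ
    hρθ htv
end
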